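/- The relation ≾ is a linear preorder on W_ω: it is reflexive, transitive, and total (for all words A, B, either A ≾ B or B ≾ A). -/

import Mathlib

open scoped Classical

/-- Words: finite strings over the alphabet of natural numbers. -/
abbrev Word := List ℕ

/-- Lexicographic "not greater" comparison of finite sequences of words,
where entries are compared with the preorder `r`. -/
def LexLe (r : Word → Word → Prop) (xs ys : List Word) : Prop :=
  (xs.length ≤ ys.length ∧ ∀ i < xs.length,
      r (xs.getD i []) (ys.getD i []) ∧ r (ys.getD i []) (xs.getD i []))
  ∨ ∃ s, s < xs.length ∧ s < ys.length ∧
      (∀ i < s, r (xs.getD i []) (ys.getD i []) ∧ r (ys.getD i []) (xs.getD i [])) ∧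
      r (xs.getD s []) (ys.getD s []) ∧ ¬ r (ys.getD s []) (xs.getD s [])

/-- `M` is a lexicographically maximal subsequence of `xs` (w.r.t. entry preorder `r`). -/
def IsLexMax (r : Word → Word → Prop) (xs M : List Word) : Prop :=
  M.Sublist xs ∧ ∀ N : List Word, N.Sublist xs → LexLe r N M

/-- Fuelled version of the recursively defined preorder `≾` on words:
`Λ ≾ Λ`; and if `n` is the minimal symbol of `A ++ B`, split `A` and `B` into
blocks at `n` and compare the lexicographically maximal subsequences of blocks. -/
def leAux : ℕ → Word → Word → Prop
  | 0, A, B => A = [] ∧ B = []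
  | (fuel+1), A, B =>
      (A = [] ∧ B = []) ∨
      (∀ m, (A ++ B).min? = some m →
        ∀ MA MB : List Word, IsLexMax (leAux fuel) (A.splitOn m) MA →
          IsLexMax (leAux fuel) (B.splitOn m) MB →
          LexLe (leAux fuel) MA MB)

/-- The preorder `≾` on words (the fuel `|A|+|B|+1` suffices for the recursion). -/
def Wle (A B : Word) : Prop := leAux (A.length + B.length + 1) A B

/-- The equivalence `∼`: `A ≾ B` and `B ≾ A`. -/
def Wequiv (A B : Word) : Prop := Wle A B ∧ Wle B A

/-- The strict relation `≺`: `A ≾ B` and not `B ≾ A`. -/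
def Wlt (A B : Word) : Prop := Wle A B ∧ ¬ Wle B A

/-- Fuelled version of the normal form predicate `NF`. -/
def NFAux : ℕ → Word → Prop
  | 0, A => A = []
  | (fuel+1), A => A = [] ∨ ∀ m, A.min? = some m →
      (A.splitOn m).Chain' (fun x y => Wle y x) ∧ ∀ b ∈ A.splitOn m, NFAux fuel b

/-- `A` is in normal form. -/
def InNF (A : Word) : Prop := NFAux A.length A

/-- `◇ₖ A`: the normal form of the word `A` with symbol `k` appended. -/
noncomputable def diamond (k : ℕ) (A : Word) : Word :=
  if h : ∃ B, InNF B ∧ Wequiv B (A ++ [k]) then h.choose else []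

/-- Fuelled version of the ordinal value functions `o_n` on normal-form words in `S_n`. -/
noncomputable def oAux : ℕ → ℕ → Word → Ordinal
  | 0, _, _ => 0
  | (fuel+1), n, A =>
      if A.all (· = n) then (A.length : Ordinal)
      else ((A.splitOn n).map (fun b => Ordinal.omega0 ^ oAux fuel (n+1) b)).foldr (· + ·) 0

/-- The ordinal value function `o_n : NF ∩ S_n → Ordinals`. -/
noncomputable def oW (n : ℕ) (A : Word) : Ordinal :=
  oAux (A.foldr max 0 + A.length + 1) n A

/-- The towers of `ω`-exponentiations: `ω_0 = 1`, `ω_{n+1} = ω ^ ω_n`. -/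
noncomputable def omegaTower : ℕ → Ordinal
  | 0 => 1
  | (n+1) => Ordinal.omega0 ^ omegaTower n

/-- `ε₀`, the supremum of the `ω`-towers. -/
noncomputable def eps0 : Ordinal := ⨆ n : ℕ, omegaTower n

/-- The function `ψ` on ordinals: `ψ 0 = ω`, and for `α > 0` with Cantor normal form
`ω^{α_1}+⋯+ω^{α_n}` (non-increasing exponents), `ψ α = ω^{α_1}+⋯+ω^{α_{n-1}}+ω^{α_n+1}`. -/
noncomputable def psi (α : Ordinal) : Ordinal :=
  match (Ordinal.CNF Ordinal.omega0 α).getLast? with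
  | none => Ordinal.omega0
  | some p =>
      ((Ordinal.CNF Ordinal.omega0 α).dropLast).foldr
        (fun q r => Ordinal.omega0 ^ q.1 * q.2 + r) 0
      + (Ordinal.omega0 ^ p.1 * (p.2 - 1) + Ordinal.omega0 ^ (p.1 + 1))

/-- The standard fundamental sequences `α[n]` for limit ordinals below `ε₀`
(junk values elsewhere). -/
noncomputable def fundSeq (α : Ordinal) (n : ℕ) : Ordinal :=
  match (Ordinal.CNF Ordinal.omega0 α).getLast? with
  | none => 0
  | some p =>
    let pre := ((Ordinal.CNF Ordinal.omega0 α).dropLast).foldr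
        (fun q r => Ordinal.omega0 ^ q.1 * q.2 + r) 0
      + Ordinal.omega0 ^ p.1 * (p.2 - 1)
    if p.1 = 0 then 0
    else if h : ∃ e', p.1 = e' + 1 then
      pre + Ordinal.omega0 ^ h.choose * ((n : Ordinal) + 1)
    else if hlt : p.1 < α then pre + Ordinal.omega0 ^ (fundSeq p.1 n) else 0
termination_by α
decreasing_by exact hlt

/-- The relation `R`: `α R β` iff `β = α + 1`, or `β` is a limit and `α = β[n]` for some `n`. -/
def Rrel (α β : Ordinal) : Prop :=
  β = α + 1 ∨ (Order.IsSuccLimit β ∧ ∃ n : ℕ, α = fundSeq β n)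

/-!
Splitting two words at their least letter produces blocks of strictly smaller total length, so
it suffices to show, by well-founded induction on total length, that `≾` is a total preorder on
every finite family of words. The induction step: if `r` is a total preorder on a set of words,
then so is the comparison of lexicographically maximal subsequences of lists from that set.
Indeed lexicographic comparison inherits totality and transitivity from `r`, and any two
lexicographically maximal subsequences of one list are equivalent, so the comparison may be made
between maxima chosen once and for all. The fuel of `leAux` is immaterial once it exceeds the
total length of the two words.
-/

structure IsTotalPreorderOn {α : Type*} (r : α → α → Prop) (s : Set α) : Prop where
  total : ∀ x ∈ s, ∀ y ∈ s, r x y ∨ r y x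
  trans : ∀ x ∈ s, ∀ y ∈ s, ∀ z ∈ s, r x y → r y z → r x z

namespace IsTotalPreorderOn

variable {α β : Type*} {r : α → α → Prop} {s : Set α}

theorem comap {r' : β → β → Prop} {t : Set β} {f : β → α} (h : IsTotalPreorderOn r s)
    (hf : Set.MapsTo f t s) (hr : ∀ x ∈ t, ∀ y ∈ t, r' x y ↔ r (f x) (f y)) :
    IsTotalPreorderOn r' t where
  total x hx y hy := by
    rw [hr x hx y hy, hr y hy x hx]
    exact h.total _ (hf hx) _ (hf hy)
  trans x hx y hy z hz := by
    rw [hr x hx y hy, hr y hy z hz, hr x hx z hz]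
    exact h.trans _ (hf hx) _ (hf hy) _ (hf hz)

theorem exists_forall_rel {l : List α} (h : IsTotalPreorderOn r s) (hl : ∀ x ∈ l, x ∈ s)
    (hne : l ≠ []) : ∃ m ∈ l, ∀ x ∈ l, r x m := by
  induction l with
  | nil => exact absurd rfl hne
  | cons a l ih =>
    simp only [List.forall_mem_cons] at hl
    have haa : r a a := (h.total a hl.1 a hl.1).elim id id
    rcases eq_or_ne l [] with rfl | hl'
    · exact ⟨a, by simp, by simpa using haa⟩
    obtain ⟨m, hm, hmax⟩ := ih hl.2 hl'
    rcases h.total a hl.1 m (hl.2 m hm) with ham | hma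
    · exact ⟨m, by simp [hm], by simpa [ham] using hmax⟩
    · have hxa : ∀ x ∈ l, r x a := fun x hx =>
        h.trans x (hl.2 x hx) m (hl.2 m hm) a hl.1 (hmax x hx) hma
      exact ⟨a, by simp, by simpa [haa] using hxa⟩

end IsTotalPreorderOn

theorem List.sum_length_splitOn_add_count {α : Type*} [BEq α] [LawfulBEq α] (a : α) (l : List α) :
    ((l.splitOn a).map length).sum + l.count a = l.length := by
  induction l with
  | nil => simp
  | cons x l ih =>
    rw [splitOn_cons_eq_if_modifyHead]
    split_ifs with hx
    · simp only [map_cons, length_nil, sum_cons, zero_add, count_cons, hx, ↓reduceIte,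
        length_cons]
      omega
    · obtain ⟨b, bs, hbs⟩ := exists_cons_of_ne_nil (splitOn_ne_nil a l)
      rw [hbs] at ih ⊢
      simp only [map_cons, sum_cons, modifyHead_cons, length_cons, count_cons, hx,
        Bool.false_eq_true, ↓reduceIte, add_zero] at ih ⊢
      omega

theorem List.sum_length_flatMap_splitOn_add_count {α : Type*} [BEq α] [LawfulBEq α] (a : α)
    (L : List (List α)) :
    ((L.flatMap (·.splitOn a)).map length).sum + L.flatten.count a = (L.map length).sum := by
  induction L with
  | nil => simp
  | cons l L ih =>
    have := sum_length_splitOn_add_count a l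
    simp only [flatMap_cons, map_append, sum_append, flatten_cons, count_append, map_cons,
      sum_cons]
    omega

section LexLe

variable {r r' : Word → Word → Prop} {t : Set Word} {x y : Word} {xs ys zs : List Word}

theorem lexLe_nil_left : LexLe r [] ys := Or.inl ⟨Nat.zero_le _, by simp⟩

theorem not_lexLe_cons_nil : ¬ LexLe r (x :: xs) [] := by
  rintro (⟨h, -⟩ | ⟨s, -, h, -⟩) <;> simp at h

theorem lexLe_cons_cons : LexLe r (x :: xs) (y :: ys) ↔
    (r x y ∧ ¬ r y x) ∨ (r x y ∧ r y x) ∧ LexLe r xs ys := by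
  unfold LexLe
  rw [← Nat.or_exists_add_one]
  simp only [List.length_cons, Nat.add_le_add_iff_right, Nat.forall_lt_succ_left,
    Nat.add_lt_add_iff_right, List.getD_cons_zero, List.getD_cons_succ, Nat.zero_lt_succ,
    Nat.not_lt_zero, true_and]
  grind

theorem lexLe_singleton : LexLe r [x] [y] ↔ r x y := by
  rw [lexLe_cons_cons]
  have := lexLe_nil_left (r := r) (ys := [])
  tauto

theorem lexLe_total (h : ∀ x ∈ xs, ∀ y ∈ ys, r x y ∨ r y x) :
    LexLe r xs ys ∨ LexLe r ys xs := by
  induction xs generalizing ys with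
  | nil => exact Or.inl lexLe_nil_left
  | cons x xs ih =>
    cases ys with
    | nil => exact Or.inr lexLe_nil_left
    | cons y ys =>
      simp only [List.forall_mem_cons] at h
      have := ih (ys := ys) fun x' hx' y' hy' => (h.2 x' hx').2 y' hy'
      simp only [lexLe_cons_cons]
      have := h.1.1
      tauto

theorem lexLe_trans (htrans : ∀ x ∈ t, ∀ y ∈ t, ∀ z ∈ t, r x y → r y z → r x z)
    (hxs : ∀ x ∈ xs, x ∈ t) (hys : ∀ y ∈ ys, y ∈ t) (hzs : ∀ z ∈ zs, z ∈ t) :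
    LexLe r xs ys → LexLe r ys zs → LexLe r xs zs := by
  induction xs generalizing ys zs with
  | nil => exact fun _ _ => lexLe_nil_left
  | cons x xs ih =>
    cases ys with
    | nil => exact fun h => absurd h not_lexLe_cons_nil
    | cons y ys =>
      cases zs with
      | nil => exact fun _ h => absurd h not_lexLe_cons_nil
      | cons z zs =>
        simp only [List.forall_mem_cons] at hxs hys hzs
        have := ih hxs.2 hys.2 hzs.2
        have := htrans x hxs.1 y hys.1 z hzs.1
        have := htrans y hys.1 z hzs.1 x hxs.1
        have := htrans z hzs.1 x hxs.1 y hys.1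
        simp only [lexLe_cons_cons]
        tauto

theorem lexLe_congr (h : ∀ x ∈ t, ∀ y ∈ t, r x y ↔ r' x y)
    (hxs : ∀ x ∈ xs, x ∈ t) (hys : ∀ y ∈ ys, y ∈ t) : LexLe r xs ys ↔ LexLe r' xs ys := by
  induction xs generalizing ys with
  | nil => exact iff_of_true lexLe_nil_left lexLe_nil_left
  | cons x xs ih =>
    cases ys with
    | nil => exact iff_of_false not_lexLe_cons_nil not_lexLe_cons_nil
    | cons y ys =>
      simp only [List.forall_mem_cons] at hxs hys
      simp only [lexLe_cons_cons, h x hxs.1 y hys.1, h y hys.1 x hxs.1, ih hxs.2 hys.2]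

end LexLe

section LexMax

variable {r r' : Word → Word → Prop} {t : Set Word} {x y : Word} {l lA lB M MA MB : List Word}

theorem IsTotalPreorderOn.lexLe (h : IsTotalPreorderOn r t) :
    IsTotalPreorderOn (LexLe r) {l | ∀ x ∈ l, x ∈ t} where
  total _ hxs _ hys := lexLe_total fun x hx y hy => h.total x (hxs x hx) y (hys y hy)
  trans _ hxs _ hys _ hzs := lexLe_trans h.trans hxs hys hzs

theorem exists_isLexMax (h : IsTotalPreorderOn r t) (hl : ∀ x ∈ l, x ∈ t) :
    ∃ M, IsLexMax r l M := by
  obtain ⟨M, hM, hmax⟩ := h.lexLe.exists_forall_rel (l := l.sublists)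
    (fun N hN x hx => hl x ((List.mem_sublists.1 hN).subset hx))
    (List.ne_nil_of_mem (List.mem_sublists.2 (List.nil_sublist l)))
  exact ⟨M, List.mem_sublists.1 hM, fun N hN => hmax N (List.mem_sublists.2 hN)⟩

theorem isLexMax_singleton (hx : r x x) : IsLexMax r [x] M ↔ M = [x] := by
  refine ⟨fun ⟨hsub, hmax⟩ => ?_, ?_⟩
  · rcases List.sublist_singleton.1 hsub with rfl | rfl
    · exact absurd (hmax [x] (List.Sublist.refl _)) not_lexLe_cons_nil
    · rfl
  · rintro rfl
    refine ⟨List.Sublist.refl _, fun N hN => ?_⟩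
    rcases List.sublist_singleton.1 hN with rfl | rfl
    · exact lexLe_nil_left
    · exact lexLe_singleton.2 hx

theorem isLexMax_congr (h : ∀ x ∈ t, ∀ y ∈ t, r x y ↔ r' x y) (hl : ∀ x ∈ l, x ∈ t) :
    IsLexMax r l M ↔ IsLexMax r' l M :=
  and_congr_right fun hM => forall_congr' fun _ => imp_congr_right fun hN =>
    lexLe_congr h (fun x hx => hl x (hN.subset hx)) (fun x hx => hl x (hM.subset hx))

theorem IsLexMax.forall_mem (hM : IsLexMax r l M) (hl : ∀ x ∈ l, x ∈ t) : ∀ x ∈ M, x ∈ t :=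
  fun x hx => hl x (hM.1.subset hx)

def LexMaxLe (r : Word → Word → Prop) (lA lB : List Word) : Prop :=
  ∀ MA MB, IsLexMax r lA MA → IsLexMax r lB MB → LexLe r MA MB

theorem lexMaxLe_self : LexMaxLe r l l := fun _ _ hA hB => hB.2 _ hA.1

theorem lexMaxLe_singleton (hx : r x x) (hy : r y y) : LexMaxLe r [x] [y] ↔ r x y := by
  simp only [LexMaxLe, isLexMax_singleton hx, isLexMax_singleton hy, forall_eq_apply_imp_iff,
    forall_eq, lexLe_singleton]

theorem lexMaxLe_congr (h : ∀ x ∈ t, ∀ y ∈ t, r x y ↔ r' x y) (hA : ∀ x ∈ lA, x ∈ t)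
    (hB : ∀ x ∈ lB, x ∈ t) : LexMaxLe r lA lB ↔ LexMaxLe r' lA lB := by
  refine forall₂_congr fun MA MB => ?_
  rw [isLexMax_congr h hA, isLexMax_congr h hB]
  exact imp_congr_right fun hMA => imp_congr_right fun hMB =>
    lexLe_congr h (hMA.forall_mem hA) (hMB.forall_mem hB)

theorem IsLexMax.lexMaxLe_iff (h : IsTotalPreorderOn r t) (hA : ∀ x ∈ lA, x ∈ t)
    (hB : ∀ x ∈ lB, x ∈ t) (hMA : IsLexMax r lA MA) (hMB : IsLexMax r lB MB) :
    LexMaxLe r lA lB ↔ LexLe r MA MB := by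
  refine ⟨fun H => H MA MB hMA hMB, fun H MA' MB' hMA' hMB' => ?_⟩
  have hMB_le : LexLe r MA MB' := h.lexLe.trans _ (hMA.forall_mem hA) _ (hMB.forall_mem hB) _
    (hMB'.forall_mem hB) H (hMB'.2 _ hMB.1)
  exact h.lexLe.trans _ (hMA'.forall_mem hA) _ (hMA.forall_mem hA) _ (hMB'.forall_mem hB)
    (hMA.2 _ hMA'.1) hMB_le

theorem IsTotalPreorderOn.lexMaxLe (h : IsTotalPreorderOn r t) :
    IsTotalPreorderOn (LexMaxLe r) {l | ∀ x ∈ l, x ∈ t} where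
  total lA hA lB hB := by
    obtain ⟨MA, hMA⟩ := exists_isLexMax h hA
    obtain ⟨MB, hMB⟩ := exists_isLexMax h hB
    rw [hMA.lexMaxLe_iff h hA hB hMB, hMB.lexMaxLe_iff h hB hA hMA]
    exact h.lexLe.total _ (hMA.forall_mem hA) _ (hMB.forall_mem hB)
  trans lA hA lB hB lC hC := by
    obtain ⟨MA, hMA⟩ := exists_isLexMax h hA
    obtain ⟨MB, hMB⟩ := exists_isLexMax h hB
    obtain ⟨MC, hMC⟩ := exists_isLexMax h hC
    rw [hMA.lexMaxLe_iff h hA hB hMB, hMB.lexMaxLe_iff h hB hC hMC,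
      hMA.lexMaxLe_iff h hA hC hMC]
    exact h.lexLe.trans _ (hMA.forall_mem hA) _ (hMB.forall_mem hB) _ (hMC.forall_mem hC)

end LexMax

theorem length_add_length_lt_of_mem_splitOn {m : ℕ} {A B x y : Word} (hm : m ∈ A ++ B)
    (hx : x ∈ A.splitOn m ++ B.splitOn m) (hy : y ∈ A.splitOn m ++ B.splitOn m) (hxy : x ≠ y) :
    x.length + y.length < A.length + B.length := by
  obtain ⟨l, hperm, hsub⟩ : [x, y].Subperm (A.splitOn m ++ B.splitOn m) :=
    List.Nodup.subperm (by simp [hxy])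
      (List.cons_subset.2 ⟨hx, List.cons_subset.2 ⟨hy, List.nil_subset _⟩⟩)
  have hle := (hsub.map List.length).sum_le_sum fun _ _ => Nat.zero_le _
  rw [(hperm.map List.length).sum_eq, List.map_append, List.sum_append] at hle
  have hA := List.sum_length_splitOn_add_count m A
  have hB := List.sum_length_splitOn_add_count m B
  have hpos := List.count_pos_iff.2 hm
  rw [List.count_append] at hpos
  simp only [List.map_cons, List.map_nil, List.sum_cons, List.sum_nil, add_zero] at hle
  omega

theorem leAux_succ {f : ℕ} {A B : Word} : leAux (f + 1) A B ↔ (A = [] ∧ B = []) ∨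
    ∀ m, (A ++ B).min? = some m → LexMaxLe (leAux f) (A.splitOn m) (B.splitOn m) :=
  Iff.rfl

theorem leAux_succ_self (f : ℕ) (A : Word) : leAux (f + 1) A A :=
  Or.inr fun _ _ => lexMaxLe_self

theorem wle_refl (A : Word) : Wle A A := leAux_succ_self _ A

theorem lexMaxLe_splitOn_congr {r r' : Word → Word → Prop} {m : ℕ} {A B : Word}
    (hm : m ∈ A ++ B) (hr : ∀ x, r x x) (hr' : ∀ x, r' x x)
    (h : ∀ x y, x.length + y.length < A.length + B.length → (r x y ↔ r' x y)) :
    LexMaxLe r (A.splitOn m) (B.splitOn m) ↔ LexMaxLe r' (A.splitOn m) (B.splitOn m) := by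
  refine lexMaxLe_congr (t := {x | x ∈ A.splitOn m ++ B.splitOn m}) (fun x hx y hy => ?_)
    (fun x hx => by simp [hx]) (fun x hx => by simp [hx])
  -- A block compared with itself is not a shorter instance, hence the reflexivity hypotheses.
  by_cases hxy : x = y
  · subst hxy
    exact iff_of_true (hr x) (hr' x)
  · exact h x y (length_add_length_lt_of_mem_splitOn hm hx hy hxy)

theorem leAux_congr {f g : ℕ} {A B : Word} (hf : A.length + B.length < f)
    (hg : A.length + B.length < g) : leAux f A B ↔ leAux g A B := by
  induction f generalizing g A B with
  | zero => omega
  | succ f ih =>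
    obtain ⟨g, rfl⟩ : ∃ g', g = g' + 1 := ⟨g - 1, by omega⟩
    rw [leAux_succ, leAux_succ]
    refine or_congr_right (forall_congr' fun m => imp_congr_right fun hmin => ?_)
    have hm : m ∈ A ++ B := (List.min?_eq_some_iff.1 hmin).1
    have hpos : 0 < A.length + B.length := by simpa using List.length_pos_of_mem hm
    obtain ⟨f, rfl⟩ : ∃ f', f = f' + 1 := ⟨f - 1, by omega⟩
    obtain ⟨g, rfl⟩ : ∃ g', g = g' + 1 := ⟨g - 1, by omega⟩
    exact lexMaxLe_splitOn_congr hm (leAux_succ_self f) (leAux_succ_self g)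
      fun x y hxy => ih (by omega) (by omega)

theorem wle_iff_lexMaxLe_splitOn {m : ℕ} {A B : Word} (hm : ∀ a ∈ A ++ B, m ≤ a) :
    Wle A B ↔ LexMaxLe Wle (A.splitOn m) (B.splitOn m) := by
  by_cases hmem : m ∈ A ++ B
  · have hmin : (A ++ B).min? = some m := List.min?_eq_some_iff.2 ⟨hmem, hm⟩
    have hne : ¬(A = [] ∧ B = []) := by rintro ⟨rfl, rfl⟩; simp at hmem
    obtain ⟨k, hk⟩ : ∃ k, A.length + B.length = k + 1 :=
      Nat.exists_eq_add_one.2 (by simpa using List.length_pos_of_mem hmem)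
    change leAux (A.length + B.length + 1) A B ↔ _
    simp only [leAux_succ, hne, false_or, hmin, Option.some.injEq, forall_eq']
    rw [hk]
    exact lexMaxLe_splitOn_congr hmem (leAux_succ_self k) wle_refl
      fun x y hxy => leAux_congr (by omega) (by omega)
  · simp only [List.mem_append, not_or] at hmem
    rw [List.splitOn_eq_singleton hmem.1, List.splitOn_eq_singleton hmem.2,
      lexMaxLe_singleton (wle_refl A) (wle_refl B)]

theorem wle_isTotalPreorderOn (S : List Word) : IsTotalPreorderOn Wle {x | x ∈ S} := by
  rcases hmin : S.flatten.min? with _ | m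
  · have hS : ∀ x ∈ S, x = [] := by simpa using hmin
    refine ⟨fun x hx y hy => ?_, fun x hx _ _ z hz _ _ => ?_⟩
    · rw [hS x hx, hS y hy]
      exact Or.inl (wle_refl [])
    · rw [hS x hx, hS z hz]
      exact wle_refl []
  · obtain ⟨hmS, hle⟩ := List.min?_eq_some_iff.1 hmin
    refine (wle_isTotalPreorderOn (S.flatMap (·.splitOn m))).lexMaxLe.comap
      (f := (·.splitOn m)) (fun x hx b hb => List.mem_flatMap.2 ⟨x, hx, hb⟩) fun x hx y hy => ?_
    refine wle_iff_lexMaxLe_splitOn fun a ha => hle a ?_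
    rcases List.mem_append.1 ha with ha | ha
    · exact List.mem_flatten.2 ⟨x, hx, ha⟩
    · exact List.mem_flatten.2 ⟨y, hy, ha⟩
termination_by (S.map List.length).sum
decreasing_by
  have := List.sum_length_flatMap_splitOn_add_count m S
  have := List.count_pos_iff.2 hmS
  linarith

theorem wle_linear_preorder :
    (∀ A : Word, Wle A A) ∧
    (∀ A B C : Word, Wle A B → Wle B C → Wle A C) ∧
    (∀ A B : Word, Wle A B ∨ Wle B A) := by
  refine ⟨wle_refl, fun A B C => ?_, fun A B => ?_⟩
  · exact (wle_isTotalPreorderOn [A, B, C]).trans A (by simp) B (by simp) C (by simp)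
  · exact (wle_isTotalPreorderOn [A, B]).total A (by simp) B (by simp)
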